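/- In the depth-t unraveling of a pointed digraph (G, v), for every node w of G and every copy w' of w at depth d ≤ t in the unraveled tree, the state of w' at time s in the run of the distributed automaton on the unraveling equals the state of w at time s in the run on G, for all s ≤ t − d. -/

import Mathlib

/-- A finite nonempty Σ-labeled 1-relational digraph. -/
structure DGraph (A : Type) where
  V : Type
  [finV : Finite V]
  [neV : Nonempty V]
  E : V → V → Prop
  lab : V → A

attribute [instance] DGraph.finV DGraph.neV

/-- A distributed automaton `A = (Q, ι, δ, F)` over Σ-labeled 1-relational
digraphs. -/
structure DA (A : Type) where
  Q : Type
  [finQ : Finite Q]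
  ι : A → Q
  δ : Q → Set Q → Q
  F : Set Q

attribute [instance] DA.finQ

/-- The run: `ρ_0(v) = ι(λ(v))`,
`ρ_{t+1}(v) = δ(ρ_t(v), {ρ_t(u) : (u,v) an edge})`. -/
def DA.run {A : Type} (M : DA A) (G : DGraph A) : ℕ → G.V → M.Q
  | 0, v => M.ι (G.lab v)
  | t+1, v => M.δ (M.run G t v) {q | ∃ u, G.E u v ∧ M.run G t u = q}

/-- Acceptance of a pointed digraph. -/
def DA.Accepts {A : Type} (M : DA A) (G : DGraph A) (v : G.V) : Prop :=
  ∃ t, M.run G t v ∈ M.F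

/-- `p` is a directed path in `G` from `u` to `root` (as a list of successive
nodes following the edges). -/
def IsPathTo {A : Type} (G : DGraph A) (u root : G.V) (p : List G.V) : Prop :=
  p.Chain' G.E ∧ p.head? = some u ∧ p.getLast? = some root

/-- `G` is a directed rooted tree (ditree) with root `root`: from each node
there is exactly one directed path to the root. -/
def IsDitree {A : Type} (G : DGraph A) (root : G.V) : Prop :=
  ∀ u : G.V, ∃! p : List G.V, IsPathTo G u root p

/-- The dipath whose node labels spell the nonempty word `w`. -/
def pathGraph {A : Type} (w : List A) (h : w ≠ []) : DGraph A where
  V := Fin w.length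
  neV := ⟨⟨0, List.length_pos_iff.mpr h⟩⟩
  E := fun u v => u.val + 1 = v.val
  lab := fun i => w.get i

/-- The last node of the dipath spelling `w`. -/
def lastNode {A : Type} (w : List A) (h : w ≠ []) : (pathGraph w h).V :=
  ⟨w.length - 1, by have := List.length_pos_iff.mpr h; omega⟩

/-- A monovisioned distributed automaton: it has a rejecting sink state `⊥ ∉ F`
with `δ(q,N) = ⊥` whenever `|N| > 1` or `⊥ ∈ N` or `q = ⊥`. -/
structure MonoDA (A : Type) extends DA A where
  bot : Q
  bot_not_accept : bot ∉ F
  sink : ∀ (q : Q) (N : Set Q),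
    (¬ N.Subsingleton ∨ bot ∈ N ∨ q = bot) → δ q N = bot

/-- The depth-`t` unraveling of a pointed digraph `(G, v)`: nodes are the
directed paths of length at most `t` in `G` ending at `v`; the copy
corresponding to a path `p` has as incoming neighbors the copies corresponding
to the paths `u :: p`; labels are inherited from the first node of the path. -/
def Unravel {A : Type} (G : DGraph A) (v : G.V) (t : ℕ) : DGraph A where
  V := {p : List G.V //
    p ≠ [] ∧ p.Chain' G.E ∧ p.getLast? = some v ∧ p.length ≤ t + 1}
  finV := by
    have h : {p : List G.V |
        p ≠ [] ∧ p.Chain' G.E ∧ p.getLast? = some v ∧ p.length ≤ t + 1} ⊆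
        {l : List G.V | l.length ≤ t + 1} := fun p hp => hp.2.2.2
    have : ({l : List G.V | l.length ≤ t + 1}).Finite := by
      have := Fintype.ofFinite G.V
      exact List.finite_length_le G.V (t + 1)
    exact (this.subset h).to_subtype
  neV := ⟨⟨[v], by simp; exact List.IsChain.singleton _⟩⟩
  E := fun p q => ∃ u, p.val = u :: q.val
  lab := fun p => G.lab (p.val.head p.prop.1)

/-- in the depth-`t` unraveling of `(G, v)`, the copy of a node
`w` at depth `d ≤ t` is, at every time `s ≤ t − d`, in the same state as `w`
in the run on `G`.  (The depth of the copy corresponding to the path `p` is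
`p.length − 1`.) -/
theorem unravel_run_eq (A : Type) (M : DA A) (G : DGraph A) (v : G.V)
    (t : ℕ) (p : (Unravel G v t).V) (s : ℕ)
    (hs : s + (p.val.length - 1) ≤ t) :
    M.run (Unravel G v t) s p = M.run G s (p.val.head p.prop.1) := by
  induction s generalizing p with
  | zero => rfl
  | succ s ih =>
    have hp1 : 1 ≤ p.val.length := List.length_pos_iff.mpr p.prop.1
    have hlen : p.val.length ≤ t := by omega
    obtain ⟨a, l, hpl⟩ := List.exists_cons_of_ne_nil p.prop.1
    have hhp : p.val.head p.prop.1 = a := by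
      have h1 : p.val.head? = some a := by rw [hpl]; rfl
      rw [List.head?_eq_head p.prop.1] at h1
      exact Option.some.inj h1
    show M.δ _ _ = M.δ _ _
    congr 1
    · exact ih p (by omega)
    · ext q
      constructor
      · rintro ⟨u, ⟨w, hw⟩, hq⟩
        have hhu : u.val.head u.prop.1 = w := by
          have h1 : u.val.head? = some w := by rw [hw]; rfl
          rw [List.head?_eq_head u.prop.1] at h1
          exact Option.some.inj h1
        refine ⟨w, ?_, ?_⟩
        · have hch := u.prop.2.1
          rw [hw, hpl] at hch
          rw [hhp]
          exact (List.isChain_cons_cons.mp hch).1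
        · rw [← hq, ← hhu]
          have hu : u.val.length - 1 = p.val.length := by rw [hw]; simp
          exact (ih u (by omega)).symm
      · rintro ⟨u, hE, hq⟩
        have hnode : (u :: p.val ≠ [] ∧ (u :: p.val).Chain' G.E ∧
            (u :: p.val).getLast? = some v ∧ (u :: p.val).length ≤ t + 1) := by
          refine ⟨by simp, ?_, ?_, by simp; omega⟩
          · apply List.isChain_cons.mpr
            refine ⟨fun y hy => ?_, p.prop.2.1⟩
            rw [hpl] at hy
            simp at hy
            subst hy
            rw [← hhp]
            exact hE
          · rw [List.getLast?_eq_getLast (l := u :: p.val) (by simp), List.getLast_cons p.prop.1,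
              ← List.getLast?_eq_getLast p.prop.1]
            exact p.prop.2.2.1
        refine ⟨⟨u :: p.val, hnode⟩, ⟨u, rfl⟩, ?_⟩
        rw [← hq]
        exact ih ⟨u :: p.val, hnode⟩ (by simp; omega)
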